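/- For real x and y with y > 0 and −y ≤ x ≤ y, x R_C(y² − x², y²) = arcsin(x/y). -/

import Mathlib

open MeasureTheory Real

noncomputable def RC (x y : ℝ) : ℝ :=
  (1/2) * ∫ t in Set.Ioi (0:ℝ), (Real.sqrt (t + x))⁻¹ * (t + y)⁻¹

noncomputable def RF (x y z : ℝ) : ℝ :=
  (1/2) * ∫ t in Set.Ioi (0:ℝ), (Real.sqrt ((t + x) * (t + y) * (t + z)))⁻¹

noncomputable def RD (x y z : ℝ) : ℝ :=
  (3/2) * ∫ t in Set.Ioi (0:ℝ),
    (Real.sqrt ((t + x) * (t + y)))⁻¹ * ((t + z) * Real.sqrt (t + z))⁻¹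

noncomputable def RJ (x y z p : ℝ) : ℝ :=
  (3/2) * ∫ t in Set.Ioi (0:ℝ),
    (Real.sqrt ((t + x) * (t + y) * (t + z)))⁻¹ * (t + p)⁻¹

noncomputable def RG (x y z : ℝ) : ℝ :=
  (1/4) * ∫ t in Set.Ioi (0:ℝ),
    (Real.sqrt ((t + x) * (t + y) * (t + z)))⁻¹ *
      (x / (t + x) + y / (t + y) + z / (t + z)) * t

/-! For fixed `c` with `c ^ 2 ≤ b`, the function `t ↦ -arcsin (c / √(t + b))` is an antiderivative
of `(c / 2) (t + b - c²)^(-1/2) (t + b)⁻¹` on `(0, ∞)` and tends to `0` at infinity, so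
`c * R_C(b - c², b) = arcsin (c / √b)`. Both sides being odd in `c`, it suffices to take `c ≥ 0`,
where the integrand is nonnegative and the improper fundamental theorem of calculus applies;
then put `b = y²`. -/

open Filter Topology Set

lemma hasDerivAt_neg_arcsin_div_sqrt {b c t : ℝ} (ht : c ^ 2 < t + b) :
    HasDerivAt (fun s => -arcsin (c / √(s + b)))
      (c / 2 * ((√(t + (b - c ^ 2)))⁻¹ * (t + b)⁻¹)) t := by
  have htb : 0 < t + b := (sq_nonneg c).trans_lt ht
  have hs : 0 < √(t + b) := sqrt_pos.2 htb
  have hu : HasDerivAt (fun s => c / √(s + b)) (-(c / (2 * √(t + b) ^ 3))) t := by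
    have h := ((hasDerivAt_id t).add_const b).sqrt htb.ne'
    refine ((hasDerivAt_const t c).div h hs.ne').congr_deriv ?_
    simp only [id]
    field_simp
    ring
  have habs : |c / √(t + b)| < 1 := by
    rw [abs_div, abs_of_pos hs, div_lt_one hs, ← sqrt_sq_eq_abs]
    exact sqrt_lt_sqrt (sq_nonneg c) ht
  have hsin := (hasDerivAt_arcsin (abs_lt.1 habs).1.ne' (abs_lt.1 habs).2.ne).comp t hu
  refine hsin.neg.congr_deriv ?_
  have hcos : √(1 - (c / √(t + b)) ^ 2) = √(t + (b - c ^ 2)) / √(t + b) := by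
    rw [div_pow, sq_sqrt htb.le, ← sqrt_div' _ htb.le]
    congr 1
    field_simp
    ring
  rw [hcos]
  field_simp
  rw [sq_sqrt htb.le]

lemma mul_RC_sub_sq_of_nonneg {b c : ℝ} (hb : 0 < b) (hc : 0 ≤ c) (hcb : c ^ 2 ≤ b) :
    c * RC (b - c ^ 2) b = arcsin (c / √b) := by
  have hcont : ContinuousAt (fun s => -arcsin (c / √(s + b))) 0 :=
    (continuous_arcsin.continuousAt.comp
      (continuousAt_const.div (by fun_prop) (by positivity))).neg
  have hlim : Tendsto (fun s => -arcsin (c / √(s + b))) atTop (𝓝 (-arcsin 0)) :=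
    ((continuous_arcsin.tendsto 0).comp (tendsto_const_nhds.div_atTop
      (tendsto_sqrt_atTop.comp (tendsto_atTop_add_const_right _ b tendsto_id)))).neg
  have hint := integral_Ioi_of_hasDerivAt_of_nonneg hcont.continuousWithinAt
    (fun t (ht : 0 < t) => hasDerivAt_neg_arcsin_div_sqrt (by linarith))
    (fun t (ht : 0 < t) => by
      have : 0 < t + (b - c ^ 2) := by linarith
      positivity) hlim
  rw [RC, ← mul_assoc, mul_one_div, ← integral_const_mul, hint, zero_add, arcsin_zero, neg_zero,
    zero_sub, neg_neg]

lemma mul_RC_sub_sq {b c : ℝ} (hb : 0 < b) (hcb : c ^ 2 ≤ b) :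
    c * RC (b - c ^ 2) b = arcsin (c / √b) := by
  rcases le_total 0 c with hc | hc
  · exact mul_RC_sub_sq_of_nonneg hb hc hcb
  · have h := mul_RC_sub_sq_of_nonneg hb (neg_nonneg.2 hc) (by rwa [neg_sq])
    rwa [neg_sq, neg_mul, neg_div, arcsin_neg, neg_inj] at h

theorem stmt5 (x y : ℝ) (hy : 0 < y) (h1 : -y ≤ x) (h2 : x ≤ y) :
    x * RC (y ^ 2 - x ^ 2) (y ^ 2) = Real.arcsin (x / y) := by
  rw [mul_RC_sub_sq (by positivity) (sq_le_sq' h1 h2), sqrt_sq hy.le]
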